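/- arXiv:2404.14126 — 2 statements merged into one kernel-verified Lean document; each statement's English description precedes it below -/
import Mathlib

section
/- For the canonical induced E_n-connection •∇^{E_n}_ê = ∇_{R(ê)}, the E_n-polytorsion equals minus the covariant derivative of R with respect to the torsion-free part of ∇: in local coordinates T^{∇^{E_n}}(e^{(1)},…,e^{(n+1)}) = −(1/n!) (∇̊_ρ R^{μ₁…μ_{n+1}}) e^{(1)}_{μ₁}…e^{(n+1)}_{μ_{n+1}} dx^ρ, i.e., T^{∇^{E_n}} = −∇̊R where ∇̊ is the torsionless part of the affine connection ∇. -/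
open scoped BigOperators

noncomputable section

/-- Points of the local chart. -/
abbrev Pt (d : ℕ) := Fin d → ℝ

/-- Partial derivative `∂_i f` at `x`. -/
def pd {d : ℕ} (i : Fin d) (f : Pt d → ℝ) (x : Pt d) : ℝ :=
  fderiv ℝ f x (Pi.single i 1)

/-- Lie derivative of a 1-form `e` along a vector field `X`:
`(L_X e)_μ = X^ν ∂_ν e_μ + e_ν ∂_μ X^ν`. -/
def lieD {d : ℕ} (X e : Pt d → Fin d → ℝ) : Pt d → Fin d → ℝ :=
  fun x μ => ∑ ν, (X x ν * pd ν (fun y => e y μ) x + e x ν * pd μ (fun y => X y ν) x)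

/-- Action of a vector field on a function, `X f = X^ν ∂_ν f`. -/
def act {d : ℕ} (X : Pt d → Fin d → ℝ) (f : Pt d → ℝ) (x : Pt d) : ℝ :=
  ∑ ν, X x ν * pd ν f x

/-- The vector field `Π(e)`, `(Π(e))^ν = Π^{μν} e_μ`. -/
def sharp {d : ℕ} (P : Pt d → Fin d → Fin d → ℝ) (e : Pt d → Fin d → ℝ) :
    Pt d → Fin d → ℝ :=
  fun x ν => ∑ μ, P x μ ν * e x μ

/-- Full contraction `Π(e,e') = Π^{μν} e_μ e'_ν`. -/
def pairP {d : ℕ} (P : Pt d → Fin d → Fin d → ℝ) (e e' : Pt d → Fin d → ℝ) :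
    Pt d → ℝ :=
  fun x => ∑ μ, ∑ ν, P x μ ν * e x μ * e' x ν

/-- The Koszul bracket `b₂(e,e') = L_{Π(e)}e' − L_{Π(e')}e − d(Π(e,e'))`. -/
def kb {d : ℕ} (P : Pt d → Fin d → Fin d → ℝ) (e e' : Pt d → Fin d → ℝ) :
    Pt d → Fin d → ℝ :=
  fun x μ => lieD (sharp P e) e' x μ - lieD (sharp P e') e x μ - pd μ (pairP P e e') x

/-- Interior product with the de Rham differential: `(ι_X de)_μ = X^ν(∂_ν e_μ − ∂_μ e_ν)`. -/
def iotaD {d : ℕ} (X e : Pt d → Fin d → ℝ) : Pt d → Fin d → ℝ :=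
  fun x μ => ∑ ν, X x ν * (pd ν (fun y => e y μ) x - pd μ (fun y => e y ν) x)

/-- The de Rham differential of a function, as a 1-form. -/
def dF {d : ℕ} (f : Pt d → ℝ) : Pt d → Fin d → ℝ := fun x μ => pd μ f x

/-- The anchor map of the `(n+1)`-vector `R` on decomposable `n`-forms:
`R(e₁∧…∧eₙ)^ν = R^{μ₁…μₙν} e₁_{μ₁}…eₙ_{μₙ}`. -/
def Rc {d n : ℕ} (R : Pt d → (Fin (n+1) → Fin d) → ℝ)
    (f : Fin n → (Pt d → Fin d → ℝ)) : Pt d → Fin d → ℝ :=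
  fun x ν => ∑ μ : Fin n → Fin d, R x (Fin.snoc μ ν) * ∏ i, f i x (μ i)

/-- Full contraction `R(e^{(1)},…,e^{(n+1)}) = R^{μ₁…μ_{n+1}} e^{(1)}_{μ₁}…e^{(n+1)}_{μ_{n+1}}`. -/
def Rfull {d n : ℕ} (R : Pt d → (Fin (n+1) → Fin d) → ℝ)
    (e : Fin (n+1) → (Pt d → Fin d → ℝ)) : Pt d → ℝ :=
  fun x => ∑ μ : Fin (n+1) → Fin d, R x μ * ∏ i, e i x (μ i)

/-- Total antisymmetry of the component functions of a multivector field. -/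
def Antisym {d m : ℕ} (R : Pt d → (Fin m → Fin d) → ℝ) : Prop :=
  ∀ (x : Pt d) (σ : Equiv.Perm (Fin m)) (μ : Fin m → Fin d),
    R x (μ ∘ σ) = ((Equiv.Perm.sign σ : ℤ) : ℝ) * R x μ

/-- Smoothness of (the components of) a 1-form. -/
def SmForm {d : ℕ} (e : Pt d → Fin d → ℝ) : Prop := ∀ μ, ContDiff ℝ (⊤ : ℕ∞) (fun x => e x μ)

/-- Smoothness of the components of a multivector field. -/
def SmMV {d m : ℕ} (R : Pt d → (Fin m → Fin d) → ℝ) : Prop :=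
  ∀ μ, ContDiff ℝ (⊤ : ℕ∞) (fun x => R x μ)

/-- Covariant derivative of a 1-form along a vector field with respect to an affine
connection with coefficients `Γ^ρ_{μλ}` (first index up):
`(∇_X e)_λ = X^μ(∂_μ e_λ − Γ^ρ_{μλ} e_ρ)`. -/
def covd {d : ℕ} (Γ : Pt d → Fin d → Fin d → Fin d → ℝ)
    (X e : Pt d → Fin d → ℝ) : Pt d → Fin d → ℝ :=
  fun x lam => ∑ μ, X x μ * (pd μ (fun y => e y lam) x - ∑ ρ, Γ x ρ μ lam * e x ρ)

/-- The torsionless part `Γ̊^μ_{νρ} = Γ^μ_{(νρ)}` of the connection coefficients. -/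
def Gam0 {d : ℕ} (Γ : Pt d → Fin d → Fin d → Fin d → ℝ) :
    Pt d → Fin d → Fin d → Fin d → ℝ :=
  fun x m a b => (1/2) * (Γ x m a b + Γ x m b a)

/-- The torsion `T^μ_{νρ} = Γ^μ_{νρ} − Γ^μ_{ρν}` of the connection (`Γ = Γ̊ + ½T`). -/
def Tors {d : ℕ} (Γ : Pt d → Fin d → Fin d → Fin d → ℝ) :
    Pt d → Fin d → Fin d → Fin d → ℝ :=
  fun x m a b => Γ x m a b - Γ x m b a

/-- The untwisted `(n+1)`-ary Koszul bracket (interior-product form). -/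
def bKos {d n : ℕ} (R : Pt d → (Fin (n+1) → Fin d) → ℝ)
    (e : Fin (n+1) → (Pt d → Fin d → ℝ)) : Pt d → Fin d → ℝ :=
  fun x μ =>
    (∑ r : Fin (n+1), (-1 : ℝ) ^ (n + r.val) * iotaD (Rc R (e ∘ r.succAbove)) (e r) x μ)
      + pd μ (Rfull R e) x

/-- The torsion twist `Tw_{n+1}(e^{(1)},…,e^{(n+1)}) = c Σ_r (−1)^{n−r} ⟨e^{(r)},T⟩(R(ê[r]),·)`,
the contraction of the vector-valued torsion 2-form with `e^{(r)}` and the anchored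
vector `R(ê[r])` (slot/normalization conventions fixed so that `b^T = b − Tw` is the
torsion-twisted Koszul bracket). -/
def TwTors {d n : ℕ} (Γ : Pt d → Fin d → Fin d → Fin d → ℝ)
    (R : Pt d → (Fin (n+1) → Fin d) → ℝ)
    (e : Fin (n+1) → (Pt d → Fin d → ℝ)) : Pt d → Fin d → ℝ :=
  fun x lam => (1/2) * ∑ r : Fin (n+1), (-1 : ℝ) ^ (n + r.val + 1) *
    ∑ ρ, ∑ ν, e r x ρ * Tors Γ x ρ lam ν * Rc R (e ∘ r.succAbove) x ν

/-- The torsion-twisted `(n+1)`-ary Koszul bracket `b^T_{n+1} = b_{n+1} − Tw_{n+1}`. -/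
def bKosT {d n : ℕ} (Γ : Pt d → Fin d → Fin d → Fin d → ℝ)
    (R : Pt d → (Fin (n+1) → Fin d) → ℝ)
    (e : Fin (n+1) → (Pt d → Fin d → ℝ)) : Pt d → Fin d → ℝ :=
  fun x μ => bKos R e x μ - TwTors Γ R e x μ

/-- The `E_n`-polytorsion of the canonical induced connection `•∇^{E_n}_ê = ∇_{R(ê)}`,
computed with the torsion-twisted bracket:
`T^{∇^{E_n}}(e^{(1)},…,e^{(n+1)}) = Σ_r (−1)^{n−r+1} ∇_{R(ê[r])} e^{(r)} − b^T_{n+1}(e^{(1)},…,e^{(n+1)})`. -/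
def polyTors {d n : ℕ} (Γ : Pt d → Fin d → Fin d → Fin d → ℝ)
    (R : Pt d → (Fin (n+1) → Fin d) → ℝ)
    (e : Fin (n+1) → (Pt d → Fin d → ℝ)) : Pt d → Fin d → ℝ :=
  fun x μ =>
    (∑ r : Fin (n+1), (-1 : ℝ) ^ (n + r.val) * covd Γ (Rc R (e ∘ r.succAbove)) (e r) x μ)
      - bKosT Γ R e x μ



section Aux
variable {d n : ℕ}

/-- The cycle sending `last` back to position `r`. -/
def tauPerm (r : Fin (n+1)) : Equiv.Perm (Fin (n+1)) :=
  Fin.revPerm * (Fin.cycleRange r.rev) * Fin.revPerm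

lemma tauPerm_apply (r m : Fin (n+1)) :
    tauPerm r m = Fin.rev (Fin.cycleRange r.rev (Fin.rev m)) := rfl

lemma tauPerm_sign (r : Fin (n+1)) :
    Equiv.Perm.sign (tauPerm r) = (-1) ^ (n - r.val) := by
  have h : Equiv.Perm.sign (tauPerm r) = Equiv.Perm.sign (Fin.cycleRange r.rev) := by
    unfold tauPerm
    rw [Equiv.Perm.sign_mul, Equiv.Perm.sign_mul]
    rcases Int.units_eq_one_or (Equiv.Perm.sign (Fin.revPerm : Equiv.Perm (Fin (n+1)))) with h | h <;>
      simp [h]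
  rw [h, Fin.sign_cycleRange, Fin.val_rev]
  congr 1
  omega

lemma snoc_comp_tauPerm (r : Fin (n+1)) (κ : Fin n → Fin d) (y : Fin d) (m : Fin (n+1)) :
    (Fin.snoc κ y : Fin (n+1) → Fin d) (tauPerm r m)
      = (r.insertNth y κ : Fin (n+1) → Fin d) m := by
  rcases eq_or_ne m r with h | h
  · subst h
    rw [tauPerm_apply, Fin.cycleRange_self, Fin.insertNth_apply_same]
    have h0 : (Fin.rev (0 : Fin (n+1))) = Fin.last n := by
      ext; simp [Fin.val_rev]
    rw [h0, Fin.snoc_last]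
  · obtain ⟨i, rfl⟩ := Fin.exists_succAbove_eq h
    rw [tauPerm_apply, Fin.rev_succAbove, Fin.cycleRange_succAbove, Fin.rev_succ, Fin.rev_rev,
      Fin.snoc_castSucc, Fin.insertNth_apply_succAbove]

lemma neg_one_pow_sub_eq (r : Fin (n+1)) :
    ((-1 : ℝ)) ^ (n - r.val) = (-1 : ℝ) ^ (n + r.val) := by
  have h : n + r.val = (n - r.val) + 2 * r.val := by omega
  rw [h, pow_add, pow_mul]
  norm_num

lemma key_sign (R : Pt d → (Fin (n+1) → Fin d) → ℝ) (hR : Antisym R) (x : Pt d)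
    (r : Fin (n+1)) (κ : Fin n → Fin d) (y : Fin d) :
    R x (Fin.snoc κ y) = (-1 : ℝ) ^ (n + r.val) * R x (r.insertNth y κ) := by
  have h1 := hR x (tauPerm r) (Fin.snoc κ y)
  have h2 : (Fin.snoc κ y : Fin (n+1) → Fin d) ∘ (tauPerm r) = r.insertNth y κ := by
    funext m; exact snoc_comp_tauPerm r κ y m
  rw [h2, tauPerm_sign] at h1
  have h3 : (((((-1 : ℤˣ)) ^ (n - r.val) : ℤˣ) : ℤ) : ℝ) = (-1 : ℝ) ^ (n + r.val) := by
    rw [← neg_one_pow_sub_eq r]; push_cast; norm_num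
  rw [h3] at h1
  have h4 : ((-1 : ℝ) ^ (n + r.val)) * ((-1 : ℝ) ^ (n + r.val)) = 1 := by
    rw [← pow_add]; simp [pow_add, ← two_mul, pow_mul]
  calc R x (Fin.snoc κ y)
      = ((-1:ℝ) ^ (n + r.val) * (-1:ℝ) ^ (n + r.val)) * R x (Fin.snoc κ y) := by rw [h4, one_mul]
    _ = (-1:ℝ) ^ (n + r.val) * R x (r.insertNth y κ) := by rw [mul_assoc, ← h1]

end Aux

section Aux2
variable {d n : ℕ}

lemma neg_one_sq_pow (k : ℕ) (a : ℝ) : (-1:ℝ)^k * ((-1:ℝ)^k * a) = a := by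
  rw [← mul_assoc, ← pow_add, ← two_mul, pow_mul]
  norm_num

lemma pd_sum {ι : Type*} (s : Finset ι) (f : ι → Pt d → ℝ) (x : Pt d) (i : Fin d)
    (hf : ∀ a ∈ s, DifferentiableAt ℝ (f a) x) :
    pd i (fun y => ∑ a ∈ s, f a y) x = ∑ a ∈ s, pd i (f a) x := by
  unfold pd
  rw [fderiv_fun_sum hf]
  simp

lemma prod_erase_eq_succAbove {M : Type*} [CommMonoid M] {m : ℕ} (f : Fin (m+1) → M)
    (r : Fin (m+1)) :
    ∏ j ∈ Finset.univ.erase r, f j = ∏ i : Fin m, f (r.succAbove i) := by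
  calc ∏ j ∈ Finset.univ.erase r, f j
      = ∏ j, Function.update f r 1 j := by
        rw [Finset.prod_update_of_mem (Finset.mem_univ r), one_mul,
          Finset.sdiff_singleton_eq_erase]
    _ = Function.update f r 1 r * ∏ i : Fin m, Function.update f r 1 (r.succAbove i) :=
        Fin.prod_univ_succAbove _ r
    _ = ∏ i : Fin m, f (r.succAbove i) := by
        rw [Function.update_self, one_mul]
        exact Finset.prod_congr rfl fun i _ => Function.update_of_ne (Fin.succAbove_ne r i) _ _

lemma pd_mul_prod {m : ℕ} (g : Pt d → ℝ) (f : Fin (m+1) → Pt d → ℝ) (x : Pt d) (lam : Fin d)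
    (hg : DifferentiableAt ℝ g x) (hf : ∀ j, DifferentiableAt ℝ (f j) x) :
    pd lam (fun y => g y * ∏ j, f j y) x
      = pd lam g x * ∏ j, f j x
        + ∑ r, g x * pd lam (f r) x * ∏ i : Fin m, f (r.succAbove i) x := by
  have hprod : HasFDerivAt (fun y => ∏ j, f j y)
      (∑ j, (∏ k ∈ Finset.univ.erase j, f k x) • fderiv ℝ (f j) x) x :=
    HasFDerivAt.finset_prod (u := Finset.univ) (g := fun j y => f j y)
      (g' := fun j => fderiv ℝ (f j) x) (fun j _ => (hf j).hasFDerivAt)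
  have h := hg.hasFDerivAt.mul hprod
  unfold pd
  rw [show (fun y => g y * ∏ j, f j y) = (g * fun y => ∏ j, f j y) from rfl, h.fderiv]
  simp only [ContinuousLinearMap.add_apply, ContinuousLinearMap.smul_apply,
    ContinuousLinearMap.coe_sum', Finset.sum_apply, smul_eq_mul, Finset.mul_sum]
  rw [add_comm]
  refine congrArg₂ (· + ·) (mul_comm _ _) (Finset.sum_congr rfl fun r _ => ?_)
  rw [prod_erase_eq_succAbove]
  ring

lemma pd_Rfull (R : Pt d → (Fin (n+1) → Fin d) → ℝ) (hRsm : SmMV R)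
    (e : Fin (n+1) → (Pt d → Fin d → ℝ)) (he : ∀ i, SmForm (e i)) (x : Pt d) (lam : Fin d) :
    pd lam (Rfull R e) x
      = ∑ μvec : Fin (n+1) → Fin d,
          (pd lam (fun y => R y μvec) x * ∏ j, e j x (μvec j)
           + ∑ r, R x μvec * pd lam (fun y => e r y (μvec r)) x
               * ∏ i : Fin n, e (r.succAbove i) x (μvec (r.succAbove i))) := by
  have hRd : ∀ μvec, DifferentiableAt ℝ (fun y => R y μvec) x := fun μvec =>
    ((hRsm μvec).differentiable (by simp)).differentiableAt
  have hed : ∀ j k, DifferentiableAt ℝ (fun y => e j y k) x := fun j k =>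
    ((he j k).differentiable (by simp)).differentiableAt
  unfold Rfull
  rw [pd_sum]
  · exact Finset.sum_congr rfl fun μvec _ =>
      pd_mul_prod (fun y => R y μvec) (fun j y => e j y (μvec j)) x lam (hRd μvec)
        (fun j => hed j (μvec j))
  · intro μvec _
    have hp : HasFDerivAt (fun y => ∏ j, e j y (μvec j))
        (∑ j, (∏ k ∈ Finset.univ.erase j, e k x (μvec k)) • fderiv ℝ (fun y => e j y (μvec j)) x)
        x :=
      HasFDerivAt.finset_prod (u := Finset.univ) (g := fun j y => e j y (μvec j))
        (g' := fun j => fderiv ℝ (fun y => e j y (μvec j)) x)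
        (fun j _ => (hed j (μvec j)).hasFDerivAt)
    exact (hRd μvec).mul hp.differentiableAt

lemma Rc_signed (R : Pt d → (Fin (n+1) → Fin d) → ℝ) (hR : Antisym R)
    (e : Fin (n+1) → (Pt d → Fin d → ℝ)) (x : Pt d) (r : Fin (n+1)) (ν : Fin d) :
    (-1:ℝ) ^ (n + r.val) * Rc R (e ∘ r.succAbove) x ν
      = ∑ κ : Fin n → Fin d, R x (r.insertNth ν κ) * ∏ i, e (r.succAbove i) x (κ i) := by
  unfold Rc
  rw [Finset.mul_sum]
  refine Finset.sum_congr rfl fun κ _ => ?_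
  rw [key_sign R hR x r κ ν, mul_assoc, neg_one_sq_pow]
  rfl

lemma sum_insertNth {M : Type*} [AddCommMonoid M] (r : Fin (n+1))
    (F : (Fin (n+1) → Fin d) → M) :
    ∑ μvec : Fin (n+1) → Fin d, F μvec
      = ∑ y : Fin d, ∑ κ : Fin n → Fin d, F (r.insertNth y κ) := by
  rw [← (Fin.insertNthEquiv (fun _ => Fin d) r).sum_comp F, Fintype.sum_prod_type]
  rfl

end Aux2

section Aux3
variable {d n : ℕ}

lemma key_alg (s : ℝ) (X A B er : Fin d → ℝ) (G : Fin d → Fin d → Fin d → ℝ) (lam : Fin d) :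
    s * (∑ μ, X μ * (A μ - ∑ ρ, G ρ μ lam * er ρ))
      - s * (∑ μ, X μ * (A μ - B μ))
      + (1/2 : ℝ) * ((s * (-1)) * ∑ ρ, ∑ ν, er ρ * (G ρ lam ν - G ρ ν lam) * X ν)
    = (∑ μ, (s * X μ) * B μ)
      - ∑ y, ∑ ν, ((1/2 : ℝ) * (G y lam ν + G y ν lam)) * (s * X ν) * er y := by
  have h1 : s * (∑ μ, X μ * (A μ - ∑ ρ, G ρ μ lam * er ρ)) - s * (∑ μ, X μ * (A μ - B μ))
      = s * (∑ μ, X μ * B μ) - s * (∑ μ, ∑ ρ, X μ * (G ρ μ lam * er ρ)) := by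
    rw [← mul_sub, ← mul_sub, ← Finset.sum_sub_distrib, ← Finset.sum_sub_distrib]
    congr 1
    refine Finset.sum_congr rfl fun μ _ => ?_
    rw [← Finset.mul_sum]
    ring
  rw [h1]
  have h2 : s * ∑ μ, X μ * B μ = ∑ μ, (s * X μ) * B μ := by
    rw [Finset.mul_sum]
    exact Finset.sum_congr rfl fun μ _ => by ring
  have h3 : s * (∑ μ, ∑ ρ, X μ * (G ρ μ lam * er ρ))
        + (1/2 : ℝ) * (s * ∑ ρ, ∑ ν, er ρ * (G ρ lam ν - G ρ ν lam) * X ν)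
      = ∑ y, ∑ ν, ((1/2 : ℝ) * (G y lam ν + G y ν lam)) * (s * X ν) * er y := by
    rw [Finset.sum_comm]
    simp only [Finset.mul_sum]
    rw [← Finset.sum_add_distrib]
    refine Finset.sum_congr rfl fun y _ => ?_
    rw [← Finset.sum_add_distrib]
    refine Finset.sum_congr rfl fun ν _ => ?_
    ring
  linear_combination h2 - h3

end Aux3


/-- for the canonical induced `E_n`-connection `•∇^{E_n}_ê = ∇_{R(ê)}`,
the `E_n`-polytorsion equals minus the covariant derivative of `R` with respect to
the torsionless part `∇̊` of the affine connection:
`T^{∇^{E_n}}(e^{(1)},…,e^{(n+1)}) = −(∇̊_ρ R^{μ₁…μ_{n+1}}) e^{(1)}_{μ₁}…e^{(n+1)}_{μ_{n+1}} dx^ρ`,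
with `∇̊_ρ R^{μ₁…μ_{n+1}} = ∂_ρ R^{μ₁…μ_{n+1}} + Σ_i Γ̊^{μ_i}_{ρν} R^{μ₁…ν…μ_{n+1}}`. -/
theorem polytorsion_eq_nablaR {d n : ℕ} (hn : 1 ≤ n)
    (Γ : Pt d → Fin d → Fin d → Fin d → ℝ)
    (hΓsm : ∀ m a b, ContDiff ℝ (⊤ : ℕ∞) (fun x => Γ x m a b))
    (R : Pt d → (Fin (n+1) → Fin d) → ℝ)
    (hR : Antisym R) (hRsm : SmMV R)
    (e : Fin (n+1) → (Pt d → Fin d → ℝ)) (he : ∀ i, SmForm (e i)) :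
    ∀ (x : Pt d) (lam : Fin d),
      polyTors Γ R e x lam
        = - ∑ μvec : Fin (n+1) → Fin d,
            (pd lam (fun y => R y μvec) x
              + ∑ i, ∑ ν, Gam0 Γ x (μvec i) lam ν * R x (Function.update μvec i ν))
            * ∏ i, e i x (μvec i) := by
  intro x lam
  -- Step 1: expand `polyTors` into per-`r` pieces minus the derivative of `Rfull`.
  have hL : polyTors Γ R e x lam
      = (∑ r : Fin (n+1),
          ((-1:ℝ)^(n+r.val) * covd Γ (Rc R (e ∘ r.succAbove)) (e r) x lam
            - (-1:ℝ)^(n+r.val) * iotaD (Rc R (e ∘ r.succAbove)) (e r) x lam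
            + (1/2:ℝ) * ((-1:ℝ)^(n+r.val+1)
                * ∑ ρ, ∑ ν, e r x ρ * Tors Γ x ρ lam ν * Rc R (e ∘ r.succAbove) x ν)))
        - pd lam (Rfull R e) x := by
    simp only [polyTors, bKosT, bKos, TwTors, Finset.mul_sum, Finset.sum_add_distrib,
      Finset.sum_sub_distrib]
    ring
  -- Step 2: per-`r` algebraic identity.
  have key_r : ∀ r : Fin (n+1),
      (-1:ℝ)^(n+r.val) * covd Γ (Rc R (e ∘ r.succAbove)) (e r) x lam
        - (-1:ℝ)^(n+r.val) * iotaD (Rc R (e ∘ r.succAbove)) (e r) x lam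
        + (1/2:ℝ) * ((-1:ℝ)^(n+r.val+1)
            * ∑ ρ, ∑ ν, e r x ρ * Tors Γ x ρ lam ν * Rc R (e ∘ r.succAbove) x ν)
      = (∑ μ, ((-1:ℝ)^(n+r.val) * Rc R (e ∘ r.succAbove) x μ)
            * pd lam (fun y => e r y μ) x)
        - ∑ y, ∑ ν, Gam0 Γ x y lam ν
            * ((-1:ℝ)^(n+r.val) * Rc R (e ∘ r.succAbove) x ν) * e r x y := by
    intro r
    simp only [covd, iotaD, Tors, Gam0, pow_succ]
    exact key_alg ((-1:ℝ)^(n+r.val)) (fun μ => Rc R (e ∘ r.succAbove) x μ)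
      (fun μ => pd μ (fun y => e r y lam) x) (fun μ => pd lam (fun y => e r y μ) x)
      (fun ρ => e r x ρ) (fun a b c => Γ x a b c) lam
  -- Step 3: identity (I), the derivative cross terms.
  have hI : ∀ r : Fin (n+1),
      (∑ μ, ((-1:ℝ)^(n+r.val) * Rc R (e ∘ r.succAbove) x μ) * pd lam (fun y => e r y μ) x)
        = ∑ μvec : Fin (n+1) → Fin d, R x μvec * pd lam (fun y => e r y (μvec r)) x
            * ∏ i : Fin n, e (r.succAbove i) x (μvec (r.succAbove i)) := by
    intro r
    rw [sum_insertNth r (fun μvec => R x μvec * pd lam (fun y => e r y (μvec r)) x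
      * ∏ i : Fin n, e (r.succAbove i) x (μvec (r.succAbove i)))]
    refine Finset.sum_congr rfl fun μ _ => ?_
    rw [Rc_signed R hR e x r μ, Finset.sum_mul]
    refine Finset.sum_congr rfl fun κ _ => ?_
    simp only [Fin.insertNth_apply_same, Fin.insertNth_apply_succAbove]
    ring
  -- Step 4: identity (II), the Γ̊ terms.
  have hII : ∀ r : Fin (n+1),
      (∑ y, ∑ ν, Gam0 Γ x y lam ν
          * ((-1:ℝ)^(n+r.val) * Rc R (e ∘ r.succAbove) x ν) * e r x y)
        = ∑ μvec : Fin (n+1) → Fin d,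
            (∑ ν, Gam0 Γ x (μvec r) lam ν * R x (Function.update μvec r ν))
              * ∏ j, e j x (μvec j) := by
    intro r
    rw [sum_insertNth r (fun μvec =>
      (∑ ν, Gam0 Γ x (μvec r) lam ν * R x (Function.update μvec r ν)) * ∏ j, e j x (μvec j))]
    refine Finset.sum_congr rfl fun y _ => ?_
    calc (∑ ν, Gam0 Γ x y lam ν * ((-1:ℝ)^(n+r.val) * Rc R (e ∘ r.succAbove) x ν) * e r x y)
        = ∑ ν, ∑ κ : Fin n → Fin d, Gam0 Γ x y lam ν * R x (r.insertNth ν κ)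
            * (e r x y * ∏ i, e (r.succAbove i) x (κ i)) := by
          refine Finset.sum_congr rfl fun ν _ => ?_
          rw [Rc_signed R hR e x r ν, Finset.mul_sum, Finset.sum_mul]
          refine Finset.sum_congr rfl fun κ _ => ?_
          ring
      _ = ∑ κ : Fin n → Fin d, ∑ ν, Gam0 Γ x y lam ν * R x (r.insertNth ν κ)
            * (e r x y * ∏ i, e (r.succAbove i) x (κ i)) := Finset.sum_comm
      _ = ∑ κ : Fin n → Fin d,
            (∑ ν, Gam0 Γ x ((r.insertNth y κ : Fin (n+1) → Fin d) r) lam ν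
              * R x (Function.update (r.insertNth y κ : Fin (n+1) → Fin d) r ν))
              * ∏ j, (fun j => e j x ((r.insertNth y κ : Fin (n+1) → Fin d) j)) j := by
          refine Finset.sum_congr rfl fun κ _ => ?_
          have hprod : (∏ j, (fun j => e j x ((r.insertNth y κ : Fin (n+1) → Fin d) j)) j)
              = e r x y * ∏ i, e (r.succAbove i) x (κ i) := by
            rw [Fin.prod_univ_succAbove (fun j => e j x ((r.insertNth y κ : Fin (n+1) → Fin d) j)) r]
            simp only [Fin.insertNth_apply_same, Fin.insertNth_apply_succAbove]
          rw [hprod, Finset.sum_mul]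
          refine Finset.sum_congr rfl fun ν _ => ?_
          rw [Fin.insertNth_apply_same, Fin.update_insertNth]
  -- Step 5: assemble.
  have h5 : (∑ r : Fin (n+1),
          ((-1:ℝ)^(n+r.val) * covd Γ (Rc R (e ∘ r.succAbove)) (e r) x lam
            - (-1:ℝ)^(n+r.val) * iotaD (Rc R (e ∘ r.succAbove)) (e r) x lam
            + (1/2:ℝ) * ((-1:ℝ)^(n+r.val+1)
                * ∑ ρ, ∑ ν, e r x ρ * Tors Γ x ρ lam ν * Rc R (e ∘ r.succAbove) x ν)))
      = (∑ r : Fin (n+1), ∑ μvec : Fin (n+1) → Fin d,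
            R x μvec * pd lam (fun y => e r y (μvec r)) x
              * ∏ i : Fin n, e (r.succAbove i) x (μvec (r.succAbove i)))
        - ∑ r : Fin (n+1), ∑ μvec : Fin (n+1) → Fin d,
            (∑ ν, Gam0 Γ x (μvec r) lam ν * R x (Function.update μvec r ν))
              * ∏ j, e j x (μvec j) := by
    rw [← Finset.sum_sub_distrib]
    refine Finset.sum_congr rfl fun r _ => ?_
    rw [key_r r, hI r, hII r]
  have hD : ∑ r : Fin (n+1), ∑ μvec : Fin (n+1) → Fin d,
        R x μvec * pd lam (fun y => e r y (μvec r)) x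
          * ∏ i : Fin n, e (r.succAbove i) x (μvec (r.succAbove i))
      = ∑ μvec : Fin (n+1) → Fin d, ∑ r : Fin (n+1),
        R x μvec * pd lam (fun y => e r y (μvec r)) x
          * ∏ i : Fin n, e (r.succAbove i) x (μvec (r.succAbove i)) := Finset.sum_comm
  have hG : ∑ r : Fin (n+1), ∑ μvec : Fin (n+1) → Fin d,
        (∑ ν, Gam0 Γ x (μvec r) lam ν * R x (Function.update μvec r ν)) * ∏ j, e j x (μvec j)
      = ∑ μvec : Fin (n+1) → Fin d, ∑ i : Fin (n+1),
        (∑ ν, Gam0 Γ x (μvec i) lam ν * R x (Function.update μvec i ν)) * ∏ j, e j x (μvec j) :=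
    Finset.sum_comm
  have hP : pd lam (Rfull R e) x
      = (∑ μvec : Fin (n+1) → Fin d, pd lam (fun y => R y μvec) x * ∏ j, e j x (μvec j))
        + ∑ μvec : Fin (n+1) → Fin d, ∑ r : Fin (n+1),
            R x μvec * pd lam (fun y => e r y (μvec r)) x
              * ∏ i : Fin n, e (r.succAbove i) x (μvec (r.succAbove i)) := by
    rw [pd_Rfull R hRsm e he x lam, Finset.sum_add_distrib]
  have hRHS : ∑ μvec : Fin (n+1) → Fin d,
        (pd lam (fun y => R y μvec) x
          + ∑ i, ∑ ν, Gam0 Γ x (μvec i) lam ν * R x (Function.update μvec i ν))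
          * ∏ i, e i x (μvec i)
      = (∑ μvec : Fin (n+1) → Fin d, pd lam (fun y => R y μvec) x * ∏ j, e j x (μvec j))
        + ∑ μvec : Fin (n+1) → Fin d, ∑ i : Fin (n+1),
            (∑ ν, Gam0 Γ x (μvec i) lam ν * R x (Function.update μvec i ν))
              * ∏ j, e j x (μvec j) := by
    rw [← Finset.sum_add_distrib]
    refine Finset.sum_congr rfl fun μvec _ => ?_
    rw [add_mul, Finset.sum_mul]
  rw [hL, h5, hD, hG, hP, hRHS]
  ring
end
end

section
/- The basic n-polycurvature S^∇(e^{(1)},…,e^{(n+1)})X = ∇_X b_{n+1}(e^{(1)},…,e^{(n+1)}) − Σ_{r=1}^{n+1}(−1)^{n−r} ∇_{∇̄^{E_n}_{ê[r]}X} e^{(r)} − Σ_{r=1}^{n+1} b_{n+1}(e^{(1)},…,∇_X e^{(r)},…,e^{(n+1)}) is C^∞(M)-linear in the vector field argument X: S^∇(e^{(1)},…,e^{(n+1)})(fX) = f S^∇(e^{(1)},…,e^{(n+1)})X. -/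
open scoped BigOperators

noncomputable section

/-- The Lie bracket of vector fields. -/
def lieVF {d : ℕ} (X Y : Pt d → Fin d → ℝ) : Pt d → Fin d → ℝ :=
  fun x ν => ∑ μ, (X x μ * pd μ (fun y => Y y ν) x - Y x μ * pd μ (fun y => X y ν) x)

/-- The basic `E_n`-on-`TM` connection `∇̄^{E_n}_ê X = R(∇_X ê) + [R(ê),X]`,
on decomposables `ê = e^{(1)} ∧ … ∧ e^{(n)}`. -/
def DbarTM {d n : ℕ} (Γ : Pt d → Fin d → Fin d → Fin d → ℝ)
    (R : Pt d → (Fin (n+1) → Fin d) → ℝ)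
    (f : Fin n → (Pt d → Fin d → ℝ)) (X : Pt d → Fin d → ℝ) : Pt d → Fin d → ℝ :=
  fun x ν =>
    (∑ i, Rc R (Function.update f i (covd Γ X (f i))) x ν) + lieVF (Rc R f) X x ν

/-- The basic `n`-polycurvature
`S^∇(e^{(1)},…,e^{(n+1)})X = ∇_X b_{n+1}(e) − Σ_r (−1)^{n−r} ∇_{∇̄^{E_n}_{ê[r]}X} e^{(r)}
  − Σ_r b_{n+1}(e^{(1)},…,∇_X e^{(r)},…,e^{(n+1)})`. -/
def polyCurv {d n : ℕ} (Γ : Pt d → Fin d → Fin d → Fin d → ℝ)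
    (R : Pt d → (Fin (n+1) → Fin d) → ℝ)
    (e : Fin (n+1) → (Pt d → Fin d → ℝ)) (X : Pt d → Fin d → ℝ) :
    Pt d → Fin d → ℝ :=
  fun x lam =>
    covd Γ X (bKos R e) x lam
      - (∑ r : Fin (n+1), (-1 : ℝ) ^ (n + r.val + 1) *
          covd Γ (DbarTM Γ R (e ∘ r.succAbove) X) (e r) x lam)
      - ∑ r : Fin (n+1), bKos R (Function.update e r (covd Γ X (e r))) x lam


/-! ### Auxiliary lemmas -/

open Finset

section Helpers

variable {d n : ℕ}

lemma pd_contDiff {h : Pt d → ℝ} (hh : ContDiff ℝ (⊤ : ℕ∞) h) (i : Fin d) :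
    ContDiff ℝ (⊤ : ℕ∞) (fun x => pd i h x) := by
  have h1 : ContDiff ℝ (⊤ : ℕ∞) (fderiv ℝ h) := hh.fderiv_right (by simp)
  exact (ContinuousLinearMap.apply ℝ ℝ (Pi.single i 1 : Pt d)).contDiff.comp h1

lemma diffAt {h : Pt d → ℝ} (hh : ContDiff ℝ (⊤ : ℕ∞) h) (x : Pt d) : DifferentiableAt ℝ h x :=
  (hh.differentiable (by simp)).differentiableAt

lemma pd_mul {f g : Pt d → ℝ} {x : Pt d} (hf : ContDiff ℝ (⊤ : ℕ∞) f)
    (hg : ContDiff ℝ (⊤ : ℕ∞) g) (i : Fin d) :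
    pd i (fun y => f y * g y) x = f x * pd i g x + pd i f x * g x := by
  unfold pd
  rw [fderiv_fun_mul (diffAt hf x) (diffAt hg x)]
  simp [mul_comm]

lemma contDiff_finprod {ι : Type*} (s : Finset ι)
    (g : ι → Pt d → ℝ) (hg : ∀ i ∈ s, ContDiff ℝ (⊤ : ℕ∞) (g i)) :
    ContDiff ℝ (⊤ : ℕ∞) (fun x => ∏ i ∈ s, g i x) := by
  classical
  induction s using Finset.induction with
  | empty => simpa using contDiff_const
  | @insert a s ha ih =>
    simp only [Finset.prod_insert ha]
    exact (hg a (Finset.mem_insert_self a s)).mul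
      (ih fun i hi => hg i (Finset.mem_insert_of_mem hi))

lemma covd_contDiff {Γ : Pt d → Fin d → Fin d → Fin d → ℝ}
    (hΓ : ∀ m a b, ContDiff ℝ (⊤ : ℕ∞) fun x => Γ x m a b)
    {X : Pt d → Fin d → ℝ} (hX : SmForm X) {e : Pt d → Fin d → ℝ} (he : SmForm e) :
    SmForm (covd Γ X e) := by
  intro lam
  unfold covd
  apply ContDiff.sum; intro μ _
  exact (hX μ).mul ((pd_contDiff (he lam) μ).sub
    (ContDiff.sum fun ρ _ => (hΓ ρ μ lam).mul (he ρ)))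

lemma Rfull_contDiff {R : Pt d → (Fin (n+1) → Fin d) → ℝ} (hR : SmMV R)
    {e : Fin (n+1) → (Pt d → Fin d → ℝ)} (he : ∀ i, SmForm (e i)) :
    ContDiff ℝ (⊤ : ℕ∞) (Rfull R e) := by
  unfold Rfull
  apply ContDiff.sum; intro μ _
  exact (hR μ).mul (contDiff_finprod _ _ fun i _ => he i (μ i))

lemma prod_update_point {m : ℕ} (e : Fin m → (Pt d → Fin d → ℝ)) (i : Fin m)
    (c : Pt d → Fin d → ℝ) (x : Pt d) (μ : Fin m → Fin d) :
    (∏ j, Function.update e i c j x (μ j))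
      = c x (μ i) * ∏ j ∈ Finset.univ.erase i, e j x (μ j) := by
  rw [← Finset.mul_prod_erase Finset.univ _ (Finset.mem_univ i)]
  rw [Function.update_self]
  congr 1
  exact Finset.prod_congr rfl fun j hj => by
    rw [Function.update_of_ne (Finset.ne_of_mem_erase hj)]

lemma Rc_update_smul {m : ℕ} (R : Pt d → (Fin (m+1) → Fin d) → ℝ)
    (e : Fin m → (Pt d → Fin d → ℝ)) (i : Fin m) (f : Pt d → ℝ)
    (g : Pt d → Fin d → ℝ) (x : Pt d) (ν : Fin d) :
    Rc R (Function.update e i (fun y κ => f y * g y κ)) x ν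
      = f x * Rc R (Function.update e i g) x ν := by
  unfold Rc
  rw [Finset.mul_sum]
  refine Finset.sum_congr rfl fun μ _ => ?_
  rw [prod_update_point, prod_update_point]
  ring

lemma update_comp_succAbove_self {α : Type*} (e : Fin (n+1) → α) (r : Fin (n+1)) (c : α) :
    (Function.update e r c) ∘ r.succAbove = e ∘ r.succAbove := by
  funext i
  simp only [Function.comp_apply]
  rw [Function.update_of_ne (Fin.succAbove_ne r i)]

lemma update_comp_succAbove {α : Type*} (e : Fin (n+1) → α) (r s : Fin (n+1)) (c : α)
    (i : Fin n) (hi : s.succAbove i = r) :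
    (Function.update e r c) ∘ s.succAbove = Function.update (e ∘ s.succAbove) i c := by
  funext j
  by_cases hj : j = i
  · subst hj
    simp only [Function.comp_apply, Function.update_self]
    rw [hi, Function.update_self]
  · have hne : s.succAbove j ≠ r := fun h => hj (Fin.succAbove_right_injective (h.trans hi.symm))
    simp only [Function.comp_apply]
    rw [Function.update_of_ne hne, Function.update_of_ne hj]
    rfl

/-- The reindexing permutation and its action. -/
lemma snoc_eq_insertNth_comp (r : Fin (n+1)) (ν : Fin d) (μ : Fin n → Fin d) :
    (Fin.snoc μ ν : Fin (n+1) → Fin d)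
      = (r.insertNth ν μ) ∘ ((Fin.cycleRange r)⁻¹ * finRotate (n+1)) := by
  funext j
  induction j using Fin.lastCases with
  | last =>
    have h1 : ((Fin.cycleRange r)⁻¹ * finRotate (n+1)) (Fin.last n) = r := by
      rw [Equiv.Perm.mul_apply, finRotate_last, Equiv.Perm.inv_def, Equiv.symm_apply_eq]
      exact (Fin.cycleRange_self r).symm
    simp only [Function.comp_apply]
    rw [h1, Fin.snoc_last, Fin.insertNth_apply_same]
  | cast i =>
    have h1 : ((Fin.cycleRange r)⁻¹ * finRotate (n+1)) i.castSucc = r.succAbove i := by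
      rw [Equiv.Perm.mul_apply, finRotate_succ_apply, Fin.coeSucc_eq_succ,
        Equiv.Perm.inv_def, Equiv.symm_apply_eq]
      exact (Fin.cycleRange_succAbove r i).symm
    simp only [Function.comp_apply]
    rw [h1, Fin.snoc_castSucc, Fin.insertNth_apply_succAbove]

lemma sign_sigma (r : Fin (n+1)) :
    (((Equiv.Perm.sign ((Fin.cycleRange r)⁻¹ * finRotate (n+1)) : ℤˣ) : ℤ) : ℝ)
      = (-1 : ℝ)^(n + r.val) := by
  rw [map_mul, Equiv.Perm.sign_inv, Fin.sign_cycleRange, sign_finRotate]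
  push_cast
  rw [pow_add]
  ring

lemma R_insertNth {R : Pt d → (Fin (n+1) → Fin d) → ℝ} (hR : Antisym R)
    (x : Pt d) (r : Fin (n+1)) (ν : Fin d) (μ : Fin n → Fin d) :
    R x (r.insertNth ν μ) = (-1 : ℝ)^(n + r.val) * R x (Fin.snoc μ ν) := by
  have h := hR x ((Fin.cycleRange r)⁻¹ * finRotate (n+1)) (r.insertNth ν μ)
  rw [show (r.insertNth ν μ) ∘ ((Fin.cycleRange r)⁻¹ * finRotate (n+1))
      = (Fin.snoc μ ν : Fin (n+1) → Fin d) from (snoc_eq_insertNth_comp r ν μ).symm,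
    sign_sigma r] at h
  have hc : ((-1 : ℝ)^(n + r.val)) * ((-1 : ℝ)^(n + r.val)) = 1 := by
    rw [← mul_pow]; norm_num
  rw [h, ← mul_assoc, hc, one_mul]

lemma Rfull_update {R : Pt d → (Fin (n+1) → Fin d) → ℝ} (hR : Antisym R)
    (e : Fin (n+1) → (Pt d → Fin d → ℝ)) (r : Fin (n+1)) (g : Pt d → Fin d → ℝ) (x : Pt d) :
    Rfull R (Function.update e r g) x
      = (-1 : ℝ)^(n + r.val) * ∑ ν, Rc R (e ∘ r.succAbove) x ν * g x ν := by
  unfold Rfull Rc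
  rw [← (Fin.insertNthEquiv (fun _ => Fin d) r).sum_comp, Fintype.sum_prod_type,
    Finset.mul_sum]
  refine Finset.sum_congr rfl fun ν _ => ?_
  rw [Finset.sum_mul, Finset.mul_sum]
  refine Finset.sum_congr rfl fun μ _ => ?_
  have hins : (Fin.insertNthEquiv (fun _ => Fin d) r) (ν, μ) = r.insertNth ν μ := rfl
  rw [hins, R_insertNth hR x r ν μ, Fin.prod_univ_succAbove _ r]
  have h1 : Function.update e r g r x ((r.insertNth ν μ : Fin (n+1) → Fin d) r) = g x ν := by
    rw [Function.update_self, Fin.insertNth_apply_same]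
  have h2 : ∀ i : Fin n, Function.update e r g (r.succAbove i) x
        ((r.insertNth ν μ : Fin (n+1) → Fin d) (r.succAbove i))
      = e (r.succAbove i) x (μ i) := by
    intro i
    rw [Function.update_of_ne (Fin.succAbove_ne r i), Fin.insertNth_apply_succAbove]
  rw [h1, Finset.prod_congr rfl fun i _ => h2 i]
  simp only [Function.comp_apply]
  ring

lemma covd_vec_smul (Γ : Pt d → Fin d → Fin d → Fin d → ℝ) (f : Pt d → ℝ)
    (X e : Pt d → Fin d → ℝ) (x : Pt d) (lam : Fin d) :
    covd Γ (fun y ν => f y * X y ν) e x lam = f x * covd Γ X e x lam := by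
  unfold covd
  rw [Finset.mul_sum]
  exact Finset.sum_congr rfl fun μ _ => by ring

lemma covd_vec_decomp (Γ : Pt d → Fin d → Fin d → Fin d → ℝ)
    {W Y Z : Pt d → Fin d → ℝ} {a b : ℝ} (e : Pt d → Fin d → ℝ) (x : Pt d) (lam : Fin d)
    (h : ∀ μ, W x μ = a * Y x μ + b * Z x μ) :
    covd Γ W e x lam = a * covd Γ Y e x lam + b * covd Γ Z e x lam := by
  unfold covd
  rw [Finset.mul_sum, Finset.mul_sum, ← Finset.sum_add_distrib]
  exact Finset.sum_congr rfl fun μ _ => by rw [h μ]; ring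

lemma iotaD_vec_smul {Y Z : Pt d → Fin d → ℝ} {c : ℝ} {x : Pt d}
    (h : ∀ ν, Y x ν = c * Z x ν) (g : Pt d → Fin d → ℝ) (μ : Fin d) :
    iotaD Y g x μ = c * iotaD Z g x μ := by
  unfold iotaD
  rw [Finset.mul_sum]
  exact Finset.sum_congr rfl fun ν _ => by rw [h ν]; ring

lemma iotaD_form_smul {f : Pt d → ℝ} {g : Pt d → Fin d → ℝ} (hf : ContDiff ℝ (⊤ : ℕ∞) f)
    (hg : SmForm g) (Y : Pt d → Fin d → ℝ) (x : Pt d) (μ : Fin d) :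
    iotaD Y (fun y ν => f y * g y ν) x μ
      = f x * iotaD Y g x μ + act Y f x * g x μ - pd μ f x * ∑ ν, Y x ν * g x ν := by
  unfold iotaD act
  have key : ∀ ν, Y x ν * (pd ν (fun y => f y * g y μ) x - pd μ (fun y => f y * g y ν) x)
      = f x * (Y x ν * (pd ν (fun y => g y μ) x - pd μ (fun y => g y ν) x))
        + (Y x ν * pd ν f x) * g x μ - pd μ f x * (Y x ν * g x ν) := by
    intro ν
    rw [pd_mul hf (hg μ) ν, pd_mul hf (hg ν) μ]
    ring
  rw [Finset.sum_congr rfl fun ν _ => key ν, Finset.sum_sub_distrib, Finset.sum_add_distrib,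
    ← Finset.mul_sum, ← Finset.sum_mul, ← Finset.mul_sum]

lemma lieVF_smul (Y : Pt d → Fin d → ℝ) {f : Pt d → ℝ} {X : Pt d → Fin d → ℝ}
    (hf : ContDiff ℝ (⊤ : ℕ∞) f) (hX : SmForm X) (x : Pt d) (ν : Fin d) :
    lieVF Y (fun y κ => f y * X y κ) x ν = f x * lieVF Y X x ν + act Y f x * X x ν := by
  unfold lieVF act
  have key : ∀ μ, Y x μ * pd μ (fun y => f y * X y ν) x
        - f x * X x μ * pd μ (fun y => Y y ν) x
      = f x * (Y x μ * pd μ (fun y => X y ν) x - X x μ * pd μ (fun y => Y y ν) x)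
        + (Y x μ * pd μ f x) * X x ν := by
    intro μ
    rw [pd_mul hf (hX ν) μ]
    ring
  rw [Finset.sum_congr rfl fun μ _ => key μ, Finset.sum_add_distrib,
    ← Finset.mul_sum, ← Finset.sum_mul]

lemma DbarTM_smul (Γ : Pt d → Fin d → Fin d → Fin d → ℝ)
    (R : Pt d → (Fin (n+1) → Fin d) → ℝ) (f' : Fin n → (Pt d → Fin d → ℝ))
    {f : Pt d → ℝ} {X : Pt d → Fin d → ℝ} (hf : ContDiff ℝ (⊤ : ℕ∞) f) (hX : SmForm X)
    (x : Pt d) (ν : Fin d) :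
    DbarTM Γ R f' (fun y κ => f y * X y κ) x ν
      = f x * DbarTM Γ R f' X x ν + act (Rc R f') f x * X x ν := by
  unfold DbarTM
  rw [lieVF_smul _ hf hX x ν]
  have h : ∀ i, Rc R (Function.update f' i (covd Γ (fun y κ => f y * X y κ) (f' i))) x ν
      = f x * Rc R (Function.update f' i (covd Γ X (f' i))) x ν := by
    intro i
    have hcov : covd Γ (fun y κ => f y * X y κ) (f' i)
        = fun y lam => f y * covd Γ X (f' i) y lam := by
      funext y lam; exact covd_vec_smul Γ f X (f' i) y lam
    rw [hcov]
    exact Rc_update_smul R f' i f (covd Γ X (f' i)) x ν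
  rw [Finset.sum_congr rfl fun i _ => h i, ← Finset.mul_sum]
  ring

lemma bKos_update_smul {R : Pt d → (Fin (n+1) → Fin d) → ℝ}
    (hR : Antisym R) (hRsm : SmMV R)
    {e : Fin (n+1) → (Pt d → Fin d → ℝ)} (he : ∀ i, SmForm (e i))
    (r : Fin (n+1)) {f : Pt d → ℝ} (hf : ContDiff ℝ (⊤ : ℕ∞) f)
    {g : Pt d → Fin d → ℝ} (hg : SmForm g) (x : Pt d) (μ : Fin d) :
    bKos R (Function.update e r (fun y ν => f y * g y ν)) x μ
      = f x * bKos R (Function.update e r g) x μ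
        + (-1 : ℝ)^(n + r.val) * (act (Rc R (e ∘ r.succAbove)) f x * g x μ) := by
  classical
  set c : Pt d → Fin d → ℝ := fun y ν => f y * g y ν with hc
  have hgupd : ∀ i, SmForm (Function.update e r g i) := by
    intro i
    by_cases hi : i = r
    · subst hi; rw [Function.update_self]; exact hg
    · rw [Function.update_of_ne hi]; exact he i
  -- the pd-term
  have hRfull : Rfull R (Function.update e r c)
      = fun y => f y * Rfull R (Function.update e r g) y := by
    funext y
    unfold Rfull
    rw [Finset.mul_sum]
    refine Finset.sum_congr rfl fun κ _ => ?_
    rw [prod_update_point, prod_update_point]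
    simp only [hc]
    ring
  have hpd : pd μ (Rfull R (Function.update e r c)) x
      = f x * pd μ (Rfull R (Function.update e r g)) x
        + pd μ f x * Rfull R (Function.update e r g) x := by
    rw [hRfull]
    exact pd_mul hf (Rfull_contDiff hRsm hgupd) μ
  -- the iota-terms
  have hiota : ∀ s : Fin (n+1),
      (-1 : ℝ)^(n + s.val) * iotaD (Rc R (Function.update e r c ∘ s.succAbove))
          (Function.update e r c s) x μ
      = f x * ((-1 : ℝ)^(n + s.val) * iotaD (Rc R (Function.update e r g ∘ s.succAbove))
          (Function.update e r g s) x μ)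
        + (if s = r then
            (-1 : ℝ)^(n + r.val) * (act (Rc R (e ∘ r.succAbove)) f x * g x μ
              - pd μ f x * ∑ ν, Rc R (e ∘ r.succAbove) x ν * g x ν)
          else 0) := by
    intro s
    by_cases hs : s = r
    · subst hs
      rw [if_pos rfl, update_comp_succAbove_self, update_comp_succAbove_self,
        Function.update_self, Function.update_self]
      rw [show (c : Pt d → Fin d → ℝ) = fun y ν => f y * g y ν from rfl]
      rw [iotaD_form_smul hf hg (Rc R (e ∘ s.succAbove)) x μ]
      ring
    · rw [if_neg hs]
      obtain ⟨i, hi⟩ := Fin.exists_succAbove_eq (show r ≠ s from fun h => hs h.symm)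
      rw [update_comp_succAbove e r s c i hi, update_comp_succAbove e r s g i hi,
        Function.update_of_ne hs, Function.update_of_ne hs]
      have hvec : ∀ ν, Rc R (Function.update (e ∘ s.succAbove) i c) x ν
          = f x * Rc R (Function.update (e ∘ s.succAbove) i g) x ν := by
        intro ν
        exact Rc_update_smul R (e ∘ s.succAbove) i f g x ν
      rw [iotaD_vec_smul hvec (e s) μ]
      ring
  -- assemble
  unfold bKos
  rw [Finset.sum_congr rfl fun s _ => hiota s, Finset.sum_add_distrib, ← Finset.mul_sum,
    Finset.sum_ite_eq' Finset.univ r _, if_pos (Finset.mem_univ r), hpd,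
    Rfull_update hR e r g x]
  ring

end Helpers

/-- the basic `n`-polycurvature is `C^∞(M)`-linear (tensorial) in its
vector field argument: `S^∇(e^{(1)},…,e^{(n+1)})(fX) = f S^∇(e^{(1)},…,e^{(n+1)})X`. -/
theorem polycurvature_tensorial_in_X {d n : ℕ} (hn : 1 ≤ n)
    (Γ : Pt d → Fin d → Fin d → Fin d → ℝ)
    (hΓsm : ∀ m a b, ContDiff ℝ (⊤ : ℕ∞) (fun x => Γ x m a b))
    (R : Pt d → (Fin (n+1) → Fin d) → ℝ)
    (hR : Antisym R) (hRsm : SmMV R)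
    (e : Fin (n+1) → (Pt d → Fin d → ℝ)) (he : ∀ i, SmForm (e i))
    (X : Pt d → Fin d → ℝ) (hX : SmForm X)
    (f : Pt d → ℝ) (hf : ContDiff ℝ (⊤ : ℕ∞) f) :
    ∀ (x : Pt d) (lam : Fin d),
      polyCurv Γ R e (fun y ν => f y * X y ν) x lam = f x * polyCurv Γ R e X x lam := by
  intro x lam
  simp only [polyCurv]
  have hT2 : ∀ r : Fin (n+1),
      covd Γ (DbarTM Γ R (e ∘ r.succAbove) (fun y ν => f y * X y ν)) (e r) x lam
        = f x * covd Γ (DbarTM Γ R (e ∘ r.succAbove) X) (e r) x lam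
          + act (Rc R (e ∘ r.succAbove)) f x * covd Γ X (e r) x lam :=
    fun r => covd_vec_decomp Γ (e r) x lam
      (fun μ => DbarTM_smul Γ R (e ∘ r.succAbove) hf hX x μ)
  have hT3 : ∀ r : Fin (n+1),
      bKos R (Function.update e r (covd Γ (fun y ν => f y * X y ν) (e r))) x lam
        = f x * bKos R (Function.update e r (covd Γ X (e r))) x lam
          + (-1 : ℝ)^(n + r.val)
              * (act (Rc R (e ∘ r.succAbove)) f x * covd Γ X (e r) x lam) := by
    intro r
    have hcov : covd Γ (fun y ν => f y * X y ν) (e r)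
        = fun y ν => f y * covd Γ X (e r) y ν := by
      funext y ν; exact covd_vec_smul Γ f X (e r) y ν
    rw [hcov]
    exact bKos_update_smul hR hRsm he r hf (covd_contDiff hΓsm hX (he r)) x lam
  have h2 : (∑ r : Fin (n+1), (-1 : ℝ)^(n + r.val + 1) *
        covd Γ (DbarTM Γ R (e ∘ r.succAbove) (fun y ν => f y * X y ν)) (e r) x lam)
      = f x * (∑ r : Fin (n+1), (-1 : ℝ)^(n + r.val + 1) *
          covd Γ (DbarTM Γ R (e ∘ r.succAbove) X) (e r) x lam)
        - ∑ r : Fin (n+1), (-1 : ℝ)^(n + r.val)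
            * (act (Rc R (e ∘ r.succAbove)) f x * covd Γ X (e r) x lam) := by
    rw [Finset.mul_sum, ← Finset.sum_sub_distrib]
    refine Finset.sum_congr rfl fun r _ => ?_
    rw [hT2 r, pow_succ]
    ring
  have h3 : (∑ r : Fin (n+1),
        bKos R (Function.update e r (covd Γ (fun y ν => f y * X y ν) (e r))) x lam)
      = f x * (∑ r : Fin (n+1),
          bKos R (Function.update e r (covd Γ X (e r))) x lam)
        + ∑ r : Fin (n+1), (-1 : ℝ)^(n + r.val)
            * (act (Rc R (e ∘ r.succAbove)) f x * covd Γ X (e r) x lam) := by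
    rw [Finset.mul_sum, ← Finset.sum_add_distrib]
    exact Finset.sum_congr rfl fun r _ => hT3 r
  rw [covd_vec_smul Γ f X (bKos R e) x lam, h2, h3]
  ring
end
end
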